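/- Let A = {a_1 < a_2 < …} and B = {b_1 < b_2 < …} be infinite strictly increasing sequences of positive integers with b_1 > 1 such that P(A) = ℕ \ B. Suppose that for some k ≥ 1 we have P({a_1, …, a_k}) = [0, b_1 − 1] and that b_2 ≥ 2b_1 + 2. Then a_{k+1} = b_1 + 1, a_{k+2} ≤ 2b_1 + 1, P({a_1, …, a_{k+1}}) = [0, 2b_1] \ {b_1}, and P({a_1, …, a_{k+2}}) = [0, a_{k+2} + 2b_1] \ {b_1, a_{k+2} + b_1}. -/

import Mathlib

/-- The set of all finite subset sums of `A`: all sums of finitely many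
pairwise distinct elements of `A`; by convention `0 ∈ subsetSums A`. -/
def subsetSums (A : Set ℕ) : Set ℕ :=
  {n | ∃ F : Finset ℕ, ↑F ⊆ A ∧ F.sum id = n}

/-!
Adjoining a new element `c` to a set turns its subset sums `P` into `P ∪ (c + P)`. Since `b₁` is
not a subset sum while everything strictly between `b₁` and `b₂ ≥ 2b₁ + 2` is, `a_{k+1}` can
neither be at most `b₁` (then `b₁ ∈ a_{k+1} + [0, b₁ - 1]`) nor exceed `b₁ + 1` (the sum `b₁ + 1`
must use some `a_j` with `j > k`). Hence `P({a_1, …, a_{k+1}}) = [0, 2b₁] \ {b₁}`, and the same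
argument applied to `2b₁ + 1` bounds `a_{k+2}`, after which the last formula is interval arithmetic.
-/

open Set

lemma subsetSums_mono {A B : Set ℕ} (h : A ⊆ B) : subsetSums A ⊆ subsetSums B :=
  fun _ ⟨F, hF, hsum⟩ => ⟨F, hF.trans h, hsum⟩

lemma subsetSums_insert {c : ℕ} {A : Set ℕ} (hc : c ∉ A) :
    subsetSums (insert c A) = subsetSums A ∪ (c + ·) '' subsetSums A := by
  ext n
  constructor
  · rintro ⟨F, hF, rfl⟩
    by_cases hcF : c ∈ F
    · refine Or.inr ⟨(F.erase c).sum id, ⟨F.erase c, ?_, rfl⟩, Finset.add_sum_erase F id hcF⟩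
      intro x hx
      rw [Finset.coe_erase] at hx
      exact (hF hx.1).resolve_left hx.2
    · exact Or.inl ⟨F, fun x hx => (hF hx).resolve_left (ne_of_mem_of_not_mem hx hcF), rfl⟩
  · rintro (⟨F, hF, rfl⟩ | ⟨_, ⟨F, hF, rfl⟩, rfl⟩)
    · exact ⟨F, hF.trans (subset_insert c A), rfl⟩
    · refine ⟨insert c F, ?_, Finset.sum_insert fun h => hc (hF h)⟩
      rw [Finset.coe_insert]
      exact insert_subset_insert hF

lemma exists_le_of_mem_subsetSums_of_notMem {A B : Set ℕ} {x : ℕ}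
    (hA : x ∈ subsetSums A) (hB : x ∉ subsetSums B) : ∃ y ∈ A \ B, y ≤ x := by
  obtain ⟨F, hF, rfl⟩ := hA
  have : ¬ ↑F ⊆ B := fun hFB => hB ⟨F, hFB, rfl⟩
  obtain ⟨y, hyF, hyB⟩ := not_subset.mp this
  exact ⟨y, ⟨hF hyF, hyB⟩, Finset.single_le_sum (f := id) (fun _ _ => Nat.zero_le _) hyF⟩

lemma notMem_image_of_lt_of_lt {b : ℕ → ℕ} (hb : StrictMonoOn b (Ici 1)) {n x : ℕ} (hn : 1 ≤ n)
    (hlo : b n < x) (hhi : x < b (n + 1)) : x ∉ b '' Ici 1 := by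
  rintro ⟨j, hj, rfl⟩
  rcases le_or_gt j n with hjn | hjn
  · exact (hb.le_iff_le hj hn).mpr hjn |>.not_gt hlo
  · exact (hb.le_iff_le (mem_Ici.mpr (by omega)) hj).mpr hjn |>.not_gt hhi

section StrictMonoOn

variable {a : ℕ → ℕ} (ha : StrictMonoOn a (Ici 1))
include ha

lemma subsetSums_image_Icc_add_one (m : ℕ) :
    subsetSums (a '' Icc 1 (m + 1)) =
      subsetSums (a '' Icc 1 m) ∪ (a (m + 1) + ·) '' subsetSums (a '' Icc 1 m) := by
  rw [← insert_Icc_right_eq_Icc_add_one (by omega), image_insert_eq, subsetSums_insert]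
  rintro ⟨j, hj, hja⟩
  exact (Nat.lt_succ_of_le hj.2).ne (ha.injOn hj.1 (mem_Ici.mpr m.succ_pos) hja)

lemma apply_add_one_le_of_mem_subsetSums {m x : ℕ} (hx : x ∈ subsetSums (a '' Ici 1))
    (hxm : x ∉ subsetSums (a '' Icc 1 m)) : a (m + 1) ≤ x := by
  obtain ⟨_, ⟨⟨j, hj, rfl⟩, hjm⟩, hle⟩ := exists_le_of_mem_subsetSums_of_notMem hx hxm
  have hmj : m + 1 ≤ j := by
    by_contra h
    exact hjm ⟨j, ⟨hj, by omega⟩, rfl⟩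
  exact ((ha.le_iff_le (mem_Ici.mpr (by omega)) hj).mpr hmj).trans hle

end StrictMonoOn

lemma Icc_union_image_add_Icc {n : ℕ} (hn : 1 ≤ n) :
    Icc 0 (n - 1) ∪ (n + 1 + ·) '' Icc 0 (n - 1) = Icc 0 (2 * n) \ {n} := by
  rw [image_const_add_Icc]
  ext x
  simp only [mem_union, mem_Icc, mem_sdiff, mem_singleton_iff]
  omega

lemma Icc_diff_union_image_add {p c : ℕ} (hpc : p < c) (hc : c ≤ 2 * p + 1) :
    Icc 0 (2 * p) \ {p} ∪ (c + ·) '' (Icc 0 (2 * p) \ {p}) =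
      Icc 0 (c + 2 * p) \ {p, c + p} := by
  ext x
  simp only [mem_union, mem_image, mem_sdiff, mem_Icc, mem_singleton_iff, mem_insert_iff]
  constructor
  · rintro (h | ⟨y, hy, rfl⟩) <;> omega
  · intro h
    by_cases hxc : x < c
    · exact Or.inl (by omega)
    · exact Or.inr ⟨x - c, by omega, by omega⟩

theorem stmt_4_general (a b : ℕ → ℕ) (k : ℕ)
    (hamono : ∀ n, 1 ≤ n → a n < a (n + 1))
    (hapos : ∀ n, 1 ≤ n → 0 < a n)
    (hbmono : ∀ n, 1 ≤ n → b n < b (n + 1))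
    (hPA : subsetSums (a '' {n | 1 ≤ n}) = (b '' {n | 1 ≤ n})ᶜ)
    (hPk : subsetSums (a '' Set.Icc 1 k) = Set.Icc 0 (b 1 - 1))
    (hb2 : 2 * b 1 + 2 ≤ b 2) :
    a (k + 1) = b 1 + 1 ∧
    a (k + 2) ≤ 2 * b 1 + 1 ∧
    subsetSums (a '' Set.Icc 1 (k + 1)) = Set.Icc 0 (2 * b 1) \ {b 1} ∧
    subsetSums (a '' Set.Icc 1 (k + 2)) =
      Set.Icc 0 (a (k + 2) + 2 * b 1) \ {b 1, a (k + 2) + b 1} := by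
  have ha : StrictMonoOn a (Ici 1) :=
    strictMonoOn_of_lt_add_one ordConnected_Ici fun n _ hn _ => hamono n hn
  have hb : StrictMonoOn b (Ici 1) :=
    strictMonoOn_of_lt_add_one ordConnected_Ici fun n _ hn _ => hbmono n hn
  have hgap : ∀ x, b 1 < x → x < b 2 → x ∈ subsetSums (a '' Ici 1) := fun x hlo hhi =>
    hPA ▸ notMem_image_of_lt_of_lt hb le_rfl hlo hhi
  have hb1_notMem : b 1 ∉ subsetSums (a '' Icc 1 (k + 1)) := fun h =>
    (hPA ▸ subsetSums_mono (image_mono Icc_subset_Ici_self) h) ⟨1, mem_Ici.mpr le_rfl, rfl⟩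
  have hPk1 := subsetSums_image_Icc_add_one ha k
  rw [hPk] at hPk1
  have hb1lt : 1 ≤ b 1 ∧ b 1 < a (k + 1) := by
    rw [hPk1, image_const_add_Icc] at hb1_notMem
    simp only [mem_union, mem_Icc] at hb1_notMem
    have := hapos (k + 1) (by omega)
    omega
  have hak1 : a (k + 1) = b 1 + 1 := by
    have := apply_add_one_le_of_mem_subsetSums ha (hgap _ (by omega) (by omega))
      (by rw [hPk]; simp : b 1 + 1 ∉ subsetSums (a '' Icc 1 k))
    omega
  have hP1 : subsetSums (a '' Icc 1 (k + 1)) = Icc 0 (2 * b 1) \ {b 1} := by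
    rw [hPk1, hak1, Icc_union_image_add_Icc hb1lt.1]
  have hak2 : a (k + 2) ≤ 2 * b 1 + 1 :=
    apply_add_one_le_of_mem_subsetSums ha (hgap _ (by omega) (by omega)) (by rw [hP1]; simp)
  have hak12 : a (k + 1) < a (k + 2) := hamono (k + 1) (by omega)
  refine ⟨hak1, hak2, hP1, ?_⟩
  rw [subsetSums_image_Icc_add_one ha (k + 1), hP1, Icc_diff_union_image_add (by omega) hak2]

theorem stmt_4 (a b : ℕ → ℕ) (k : ℕ) (hk : 1 ≤ k)
    (hamono : ∀ n, 1 ≤ n → a n < a (n + 1))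
    (hapos : ∀ n, 1 ≤ n → 0 < a n)
    (hbmono : ∀ n, 1 ≤ n → b n < b (n + 1))
    (hbpos : ∀ n, 1 ≤ n → 0 < b n)
    (hb1 : 1 < b 1)
    (hPA : subsetSums (a '' {n | 1 ≤ n}) = (b '' {n | 1 ≤ n})ᶜ)
    (hPk : subsetSums (a '' Set.Icc 1 k) = Set.Icc 0 (b 1 - 1))
    (hb2 : 2 * b 1 + 2 ≤ b 2) :
    a (k + 1) = b 1 + 1 ∧
    a (k + 2) ≤ 2 * b 1 + 1 ∧
    subsetSums (a '' Set.Icc 1 (k + 1)) = Set.Icc 0 (2 * b 1) \ {b 1} ∧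
    subsetSums (a '' Set.Icc 1 (k + 2)) =
      Set.Icc 0 (a (k + 2) + 2 * b 1) \ {b 1, a (k + 2) + b 1} :=
  stmt_4_general a b k hamono hapos hbmono hPA hPk hb2
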